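/- A group with finite asymptotic dimension admits a coarse embedding into a Hilbert space. -/

import Mathlib

open Metric Set
open scoped ENNReal NNReal

noncomputable section

/-- The word length of `g` with respect to a symmetrized generating set `S ∪ S⁻¹`. -/
noncomputable def wordLength {G : Type*} [Group G] (S : Set G) (g : G) : ℕ :=
  sInf {n : ℕ | ∃ l : List G, l.length = n ∧ (∀ x ∈ l, x ∈ S ∨ x⁻¹ ∈ S) ∧ l.prod = g}

/-- The word metric on a group with respect to a generating set `S`. -/
noncomputable def wordDist {G : Type*} [Group G] (S : Set G) (a b : G) : ℝ :=
  (wordLength S (a⁻¹ * b) : ℝ)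

/-- `AsdimLE d n` : the space with distance function `d` has asymptotic dimension at most `n`:
for every `D > 0` there are `B ≥ 0` and families `U 0, ..., U n` of subsets covering the space,
all of whose members have diameter at most `B`, and such that distinct members of the same
family are at mutual distance greater than `D`. -/
def AsdimLE {X : Type*} (d : X → X → ℝ) (n : ℕ) : Prop :=
  ∀ D : ℝ, 0 < D → ∃ B : ℝ, 0 ≤ B ∧ ∃ U : Fin (n + 1) → Set (Set X),
    (∀ x : X, ∃ i : Fin (n + 1), ∃ u ∈ U i, x ∈ u) ∧
    (∀ i : Fin (n + 1), ∀ u ∈ U i, ∀ x ∈ u, ∀ y ∈ u, d x y ≤ B) ∧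
    (∀ i : Fin (n + 1), ∀ u ∈ U i, ∀ v ∈ U i, u ≠ v → ∀ x ∈ u, ∀ y ∈ v, D < d x y)

/-- The asymptotic dimension of a space with distance function `d`, in `ℕ∞`. -/
noncomputable def asdimD {X : Type*} (d : X → X → ℝ) : ℕ∞ :=
  ⨅ (n : ℕ) (_ : AsdimLE d n), (n : ℕ∞)

/-- The asymptotic dimension of a pseudometric space. -/
noncomputable def asdim (X : Type*) [PseudoMetricSpace X] : ℕ∞ :=
  asdimD (fun x y : X => dist x y)


section WordMetric
set_option linter.unusedSectionVars false
variable {G : Type*} [Group G] {S : Set G}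


theorem wordSet_nonempty (hS : Subgroup.closure S = ⊤) (g : G) :
    {n : ℕ | ∃ l : List G, l.length = n ∧ (∀ x ∈ l, x ∈ S ∨ x⁻¹ ∈ S) ∧ l.prod = g}.Nonempty := by
  have hg : g ∈ Subgroup.closure S := hS ▸ Subgroup.mem_top g
  rw [← Subgroup.mem_toSubmonoid, Subgroup.closure_toSubmonoid] at hg
  obtain ⟨l, hl, hprod⟩ := Submonoid.exists_list_of_mem_closure hg
  refine ⟨l.length, l, rfl, ?_, hprod⟩
  intro x hx
  rcases hl x hx with h | h
  · exact Or.inl h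
  · exact Or.inr (by simpa using h)

theorem exists_word (hS : Subgroup.closure S = ⊤) (g : G) :
    ∃ l : List G, l.length = wordLength S g ∧ (∀ x ∈ l, x ∈ S ∨ x⁻¹ ∈ S) ∧ l.prod = g :=
  Nat.sInf_mem (wordSet_nonempty hS g)

theorem wordLength_le {g : G} {l : List G} (hl : ∀ x ∈ l, x ∈ S ∨ x⁻¹ ∈ S)
    (hprod : l.prod = g) : wordLength S g ≤ l.length :=
  Nat.sInf_le ⟨l, rfl, hl, hprod⟩

theorem wordLength_one : wordLength S (1 : G) = 0 :=
  Nat.eq_zero_of_le_zero (wordLength_le (l := []) (by simp) (by simp))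

theorem wordLength_inv_le (hS : Subgroup.closure S = ⊤) (g : G) :
    wordLength S g⁻¹ ≤ wordLength S g := by
  obtain ⟨l, hlen, hmem, hprod⟩ := exists_word hS g
  have : ((l.map fun x => x⁻¹).reverse).prod = g⁻¹ := by
    rw [← hprod, ← List.prod_inv_reverse]
  refine le_trans (wordLength_le ?_ this) (by simp [hlen])
  intro x hx
  simp only [List.mem_reverse, List.mem_map] at hx
  obtain ⟨y, hy, rfl⟩ := hx
  rcases hmem y hy with h | h
  · exact Or.inr (by simpa using h)
  · exact Or.inl h

theorem wordLength_inv (hS : Subgroup.closure S = ⊤) (g : G) :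
    wordLength S g⁻¹ = wordLength S g :=
  le_antisymm (wordLength_inv_le hS g)
    (by simpa using wordLength_inv_le hS g⁻¹)

theorem wordLength_mul_le (hS : Subgroup.closure S = ⊤) (g h : G) :
    wordLength S (g * h) ≤ wordLength S g + wordLength S h := by
  obtain ⟨l1, hlen1, hmem1, hprod1⟩ := exists_word hS g
  obtain ⟨l2, hlen2, hmem2, hprod2⟩ := exists_word hS h
  have : (l1 ++ l2).prod = g * h := by rw [List.prod_append, hprod1, hprod2]
  refine le_trans (wordLength_le ?_ this) (by simp [hlen1, hlen2])
  intro x hx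
  rcases List.mem_append.1 hx with h' | h'
  · exact hmem1 x h'
  · exact hmem2 x h'

def wordPseudoMetric (hS : Subgroup.closure S = ⊤) : PseudoMetricSpace G where
  dist := wordDist S
  dist_self a := by simp [wordDist, wordLength_one]
  dist_comm a b := by
    show wordDist S a b = wordDist S b a
    unfold wordDist
    rw [show b⁻¹ * a = (a⁻¹ * b)⁻¹ by group, wordLength_inv hS]
  dist_triangle a b c := by
    show wordDist S a c ≤ wordDist S a b + wordDist S b c
    unfold wordDist
    rw [show a⁻¹ * c = (a⁻¹ * b) * (b⁻¹ * c) by group, ← Nat.cast_add]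
    exact_mod_cast wordLength_mul_le hS _ _

theorem countable_of_gen (hS : Subgroup.closure S = ⊤) (hSc : S.Countable) : Countable G := by
  have : Countable {x : G // x ∈ S ∨ x⁻¹ ∈ S} := by
    have : {x : G | x ∈ S ∨ x⁻¹ ∈ S}.Countable := by
      have : {x : G | x ∈ S ∨ x⁻¹ ∈ S} = S ∪ (fun x => x⁻¹) ⁻¹' S := rfl
      rw [this]
      exact hSc.union (hSc.preimage (fun a b h => by simpa using congrArg (·⁻¹) h))
    exact this
  have hsurj : Function.Surjective
      (fun l : List {x : G // x ∈ S ∨ x⁻¹ ∈ S} => (l.map Subtype.val).prod) := by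
    intro g
    obtain ⟨l, _, hmem, hprod⟩ := exists_word hS g
    refine ⟨l.attach.map fun x => ⟨x.1, hmem x.1 x.2⟩, ?_⟩
    simp only [List.map_map]
    have : (List.map (Subtype.val ∘ fun x : {x // x ∈ l} => (⟨x.1, hmem x.1 x.2⟩ : {x : G // x ∈ S ∨ x⁻¹ ∈ S})) l.attach) = l := by
      simp
    rw [this, hprod]
  exact hsurj.countable

end WordMetric
section
set_option linter.unusedSectionVars false
variable {X : Type*} [PseudoMetricSpace X]

/-- bump function associated to a set. -/
def phiF (k : ℕ) (u : Set X) (x : X) : ℝ := max 0 (1 - infDist x u / 2 ^ k)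

theorem phiF_nonneg (k : ℕ) (u : Set X) (x : X) : 0 ≤ phiF k u x := le_max_left _ _

theorem phiF_le_one (k : ℕ) (u : Set X) (x : X) : phiF k u x ≤ 1 := by
  apply max_le (by norm_num)
  have h1 : (0:ℝ) ≤ infDist x u / 2 ^ k := div_nonneg infDist_nonneg (by positivity)
  linarith

theorem phiF_eq_one (k : ℕ) {u : Set X} {x : X} (h : x ∈ u) : phiF k u x = 1 := by
  unfold phiF
  rw [infDist_zero_of_mem h]
  norm_num

theorem phiF_abs_le (k : ℕ) (u : Set X) (x y : X) :
    |phiF k u x - phiF k u y| ≤ dist x y / 2 ^ k := by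
  have h2 : (0:ℝ) < 2 ^ k := by positivity
  have hlip : |infDist x u - infDist y u| ≤ dist x y := by
    have := (lipschitz_infDist_pt u).dist_le_mul x y
    rwa [Real.dist_eq, NNReal.coe_one, one_mul] at this
  have h1 : |phiF k u x - phiF k u y| ≤
      |(1 - infDist x u / 2 ^ k) - (1 - infDist y u / 2 ^ k)| := by
    unfold phiF
    rw [max_comm (0:ℝ) _, max_comm (0:ℝ) _]
    exact abs_max_sub_max_le_abs _ _ _
  have h3 : (1 - infDist x u / 2 ^ k) - (1 - infDist y u / 2 ^ k)
      = (infDist y u - infDist x u) / 2 ^ k := by ring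
  rw [h3, abs_div, abs_of_pos h2] at h1
  rw [abs_sub_comm] at hlip
  exact h1.trans (div_le_div_of_nonneg_right hlip h2.le)

theorem phiF_pos {k : ℕ} {u : Set X} {x : X} (h : 0 < phiF k u x) : infDist x u < 2 ^ k := by
  have h2 : (0:ℝ) < 2 ^ k := by positivity
  unfold phiF at h
  rcases lt_max_iff.1 h with h' | h'
  · exact absurd h' (lt_irrefl _)
  · have : infDist x u / 2 ^ k < 1 := by linarith
    rwa [div_lt_one h2] at this

/-- index of a set via an injection into ℕ. -/
def iuF (e : X → ℕ) (u : Set X) : ℕ := sInf (e '' u)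

theorem iuF_spec (e : X → ℕ) {u : Set X} (hu : u.Nonempty) : ∃ g ∈ u, e g = iuF e u := by
  have h : (e '' u).Nonempty := hu.image e
  obtain ⟨g, hg, hge⟩ := Nat.sInf_mem h
  exact ⟨g, hg, hge⟩

variable {n : ℕ}

open Classical in

/-- coordinates of the embedding. -/
def valF (U : ℕ → Fin (n+1) → Set (Set X)) (e : X → ℕ) (x : X) (p : ℕ × Fin (n+1) × ℕ) : ℝ :=
  if h : ∃ u, u ∈ U p.1 p.2.1 ∧ u.Nonempty ∧ iuF e u = p.2.2 then phiF p.1 h.choose x else 0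

theorem valF_nonneg (U : ℕ → Fin (n+1) → Set (Set X)) (e : X → ℕ) (x : X)
    (p : ℕ × Fin (n+1) × ℕ) : 0 ≤ valF U e x p := by
  unfold valF; split
  · exact phiF_nonneg _ _ _
  · exact le_refl _

theorem valF_le_one (U : ℕ → Fin (n+1) → Set (Set X)) (e : X → ℕ) (x : X)
    (p : ℕ × Fin (n+1) × ℕ) : valF U e x p ≤ 1 := by
  unfold valF; split
  · exact phiF_le_one _ _ _
  · norm_num

theorem valF_abs_le (U : ℕ → Fin (n+1) → Set (Set X)) (e : X → ℕ) (x y : X)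
    (p : ℕ × Fin (n+1) × ℕ) :
    |valF U e x p - valF U e y p| ≤ min 1 (dist x y / 2 ^ p.1) := by
  unfold valF; split
  · refine le_min ?_ (phiF_abs_le _ _ _ _)
    rw [abs_sub_le_iff]
    constructor
    · linarith [phiF_le_one p.1 (Exists.choose ‹_›) x, phiF_nonneg p.1 (Exists.choose ‹_›) y]
    · linarith [phiF_le_one p.1 (Exists.choose ‹_›) y, phiF_nonneg p.1 (Exists.choose ‹_›) x]
  · rw [sub_self, abs_zero]
    exact le_min (by norm_num) (div_nonneg dist_nonneg (by positivity))

/-- squared coordinate differences. -/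
def FF (U : ℕ → Fin (n+1) → Set (Set X)) (e : X → ℕ) (x y : X) (p : ℕ × Fin (n+1) × ℕ) : ℝ :=
  (valF U e x p - valF U e y p) ^ 2

theorem FF_nonneg (U : ℕ → Fin (n+1) → Set (Set X)) (e : X → ℕ) (x y : X)
    (p : ℕ × Fin (n+1) × ℕ) : 0 ≤ FF U e x y p := sq_nonneg _

theorem FF_le (U : ℕ → Fin (n+1) → Set (Set X)) (e : X → ℕ) (x y : X)
    (p : ℕ × Fin (n+1) × ℕ) :
    FF U e x y p ≤ min 1 (dist x y ^ 2 / 4 ^ p.1) := by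
  have h := valF_abs_le U e x y p
  have habs : (0:ℝ) ≤ |valF U e x p - valF U e y p| := abs_nonneg _
  have h1 : |valF U e x p - valF U e y p| ≤ 1 := h.trans (min_le_left _ _)
  have h2 : |valF U e x p - valF U e y p| ≤ dist x y / 2 ^ p.1 := h.trans (min_le_right _ _)
  have hFF : FF U e x y p = |valF U e x p - valF U e y p| ^ 2 := by
    rw [FF, sq_abs]
  rw [hFF]
  refine le_min ?_ ?_
  · calc |valF U e x p - valF U e y p| ^ 2 ≤ 1 ^ 2 := by gcongr
      _ = 1 := one_pow 2
  · calc |valF U e x p - valF U e y p| ^ 2 ≤ (dist x y / 2 ^ p.1) ^ 2 := by gcongr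
      _ = dist x y ^ 2 / 4 ^ p.1 := by
        rw [div_pow]
        congr 1
        rw [← pow_mul, mul_comm, pow_mul]
        norm_num

theorem coarse_embed_aux {X : Type*} [PseudoMetricSpace X] [Countable X] [Nonempty X] (n : ℕ)
    (hA : AsdimLE (fun x y : X => dist x y) n) :
    ∃ f : X → lp (fun _ : ℕ × Fin (n+1) × ℕ => ℝ) 2, ∃ ρ1 ρ2 : ℝ → ℝ,
      Monotone ρ1 ∧ Monotone ρ2 ∧ Filter.Tendsto ρ1 Filter.atTop Filter.atTop ∧
      ∀ a b : X, ρ1 (dist a b) ≤ dist (f a) (f b) ∧ dist (f a) (f b) ≤ ρ2 (dist a b) := by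
  classical
  obtain ⟨e, he⟩ := Countable.exists_injective_nat X
  choose B hB U hcov hdiam hdisj using fun k : ℕ => hA (2 ^ (k+1)) (by positivity)
  -- injectivity of the indexing on each disjoint family
  have hiu_inj : ∀ (k : ℕ) (i : Fin (n+1)) (u v : Set X), u ∈ U k i → v ∈ U k i →
      u.Nonempty → v.Nonempty → iuF e u = iuF e v → u = v := by
    intro k i u v hu hv hune hvne hiueq
    by_contra hne
    obtain ⟨g, hg, hge⟩ := iuF_spec e hune
    obtain ⟨g', hg', hge'⟩ := iuF_spec e hvne
    have hgg : g = g' := he (by rw [hge, hge', hiueq])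
    subst hgg
    have hd := hdisj k i u hu v hv hne g hg g hg'
    simp only [dist_self] at hd
    have : (0:ℝ) < 2 ^ (k+1) := by positivity
    linarith
  -- support of coordinates: at most one nonzero index per level and family
  have hval_supp : ∀ (x : X) (k : ℕ) (i : Fin (n+1)), ∃ m0 : ℕ,
      ∀ m : ℕ, m ≠ m0 → valF U e x (k, i, m) = 0 := by
    intro x k i
    by_cases hex : ∃ u, u ∈ U k i ∧ u.Nonempty ∧ 0 < phiF k u x
    · obtain ⟨u, hu, hune, hupos⟩ := hex
      refine ⟨iuF e u, fun m hm => ?_⟩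
      unfold valF
      split
      · next h =>
        obtain ⟨hu', hu'ne, hu'i⟩ := h.choose_spec
        by_contra hne0
        have hpos : 0 < phiF k h.choose x :=
          lt_of_le_of_ne (phiF_nonneg _ _ _) (Ne.symm hne0)
        have hch : h.choose ≠ u := by
          intro heq
          exact hm (by rw [← show iuF e h.choose = m from hu'i, heq])
        obtain ⟨g, hg, _⟩ := (infDist_lt_iff hune).1 (phiF_pos hupos)
        obtain ⟨g', hg', _⟩ := (infDist_lt_iff hu'ne).1 (phiF_pos hpos)
        have hd := hdisj k i u hu h.choose hu' (Ne.symm hch) g hg g' hg'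
        have htri : dist g g' ≤ dist x g + dist x g' := by
          rw [dist_comm x g]
          exact dist_triangle g x g'
        have h2 : (2:ℝ) ^ (k+1) = 2 ^ k + 2 ^ k := by ring
        simp only [h2] at hd
        linarith [‹dist x g < 2 ^ k›, ‹dist x g' < 2 ^ k›]
      · rfl
    · push_neg at hex
      refine ⟨0, fun m _ => ?_⟩
      unfold valF
      split
      · next h =>
        obtain ⟨hu', hu'ne, _⟩ := h.choose_spec
        exact le_antisymm (hex h.choose hu' hu'ne) (phiF_nonneg _ _ _)
      · rfl
  -- support of squared differences
  have hdiff_supp : ∀ (x y : X) (k : ℕ) (i : Fin (n+1)), ∃ s : Finset ℕ,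
      s.card ≤ 2 ∧ ∀ m ∉ s, FF U e x y (k, i, m) = 0 := by
    intro x y k i
    obtain ⟨m0, hm0⟩ := hval_supp x k i
    obtain ⟨m1, hm1⟩ := hval_supp y k i
    refine ⟨{m0, m1}, ?_, ?_⟩
    · exact (Finset.card_insert_le _ _).trans (by simp)
    · intro m hm
      simp only [Finset.mem_insert, Finset.mem_singleton, not_or] at hm
      rw [FF, hm0 m hm.1, hm1 m hm.2, sub_zero]
      norm_num
  have hsum_m : ∀ (x y : X) (k : ℕ) (i : Fin (n+1)),
      Summable (fun m : ℕ => FF U e x y (k, i, m)) := by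
    intro x y k i
    obtain ⟨s, _, hs⟩ := hdiff_supp x y k i
    exact summable_of_ne_finset_zero hs
  have htsum_m_le : ∀ (x y : X) (k : ℕ) (i : Fin (n+1)),
      ∑' m : ℕ, FF U e x y (k, i, m) ≤ 2 * min 1 (dist x y ^ 2 / 4 ^ k) := by
    intro x y k i
    obtain ⟨s, hcard, hs⟩ := hdiff_supp x y k i
    rw [tsum_eq_sum hs]
    have hmin0 : (0:ℝ) ≤ min 1 (dist x y ^ 2 / 4 ^ k) :=
      le_min (by norm_num) (div_nonneg (sq_nonneg _) (by positivity))
    calc ∑ m ∈ s, FF U e x y (k, i, m) ≤ s.card • min 1 (dist x y ^ 2 / 4 ^ k) :=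
          Finset.sum_le_card_nsmul _ _ _ (fun m _ => FF_le U e x y (k, i, m))
      _ = (s.card : ℝ) * min 1 (dist x y ^ 2 / 4 ^ k) := nsmul_eq_mul _ _
      _ ≤ 2 * min 1 (dist x y ^ 2 / 4 ^ k) := by
          apply mul_le_mul_of_nonneg_right _ hmin0
          exact_mod_cast hcard
  have hFnonneg : ∀ (x y : X), ∀ p : ℕ × Fin (n+1) × ℕ, 0 ≤ FF U e x y p :=
    fun x y p => FF_nonneg U e x y p
  have hsum_q : ∀ (x y : X) (k : ℕ),
      Summable (fun q : Fin (n+1) × ℕ => FF U e x y (k, q.1, q.2)) := by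
    intro x y k
    exact (summable_prod_of_nonneg (fun q => hFnonneg x y _)).2
      ⟨fun i => hsum_m x y k i, Summable.of_finite⟩
  have htsum_q_le : ∀ (x y : X) (k : ℕ),
      ∑' q : Fin (n+1) × ℕ, FF U e x y (k, q.1, q.2)
        ≤ (2 * (n+1)) * min 1 (dist x y ^ 2 / 4 ^ k) := by
    intro x y k
    rw [Summable.tsum_prod' (hsum_q x y k) (fun i => hsum_m x y k i), tsum_fintype]
    calc ∑ i : Fin (n+1), ∑' m : ℕ, FF U e x y (k, i, m)
        ≤ ∑ _i : Fin (n+1), 2 * min 1 (dist x y ^ 2 / 4 ^ k) :=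
          Finset.sum_le_sum (fun i _ => htsum_m_le x y k i)
      _ = (2 * (n+1)) * min 1 (dist x y ^ 2 / 4 ^ k) := by
          rw [Finset.sum_const, Finset.card_univ, Fintype.card_fin, nsmul_eq_mul]
          push_cast
          ring
  have hgeom : ∀ c : ℝ, 0 ≤ c → Summable (fun k : ℕ => min 1 (c / 4 ^ k)) := by
    intro c hc
    apply Summable.of_nonneg_of_le
      (fun k => le_min (by norm_num) (div_nonneg hc (by positivity)))
      (fun k => (min_le_right _ _).trans (le_of_eq ?_))
      ((summable_geometric_of_lt_one (by norm_num) (by norm_num : (1/4 : ℝ) < 1)).mul_left c)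
    rw [div_eq_mul_inv, ← one_div, one_div_pow]
  have hgeom2 : ∀ (x y : X), Summable
      (fun k : ℕ => (2 * ((n:ℝ)+1)) * min 1 (dist x y ^ 2 / 4 ^ k)) := by
    intro x y
    exact (hgeom _ (sq_nonneg (dist x y))).mul_left _
  have hsum_k : ∀ (x y : X), Summable
      (fun k : ℕ => ∑' q : Fin (n+1) × ℕ, FF U e x y (k, q.1, q.2)) := by
    intro x y
    refine Summable.of_nonneg_of_le
      (fun k => tsum_nonneg (fun q => hFnonneg x y _))
      (fun k => ?_) (hgeom2 x y)
    exact_mod_cast htsum_q_le x y k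
  have hsumF : ∀ (x y : X), Summable (FF U e x y) := by
    intro x y
    exact (summable_prod_of_nonneg (fun p => hFnonneg x y _)).2
      ⟨fun k => hsum_q x y k, hsum_k x y⟩
  have htsum_le : ∀ (x y : X),
      ∑' p : ℕ × Fin (n+1) × ℕ, FF U e x y p
        ≤ (2 * ((n:ℝ)+1)) * ∑' k : ℕ, min 1 (dist x y ^ 2 / 4 ^ k) := by
    intro x y
    rw [Summable.tsum_prod' (hsumF x y) (fun k => hsum_q x y k)]
    calc ∑' k : ℕ, ∑' q : Fin (n+1) × ℕ, FF U e x y (k, q.1, q.2)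
        ≤ ∑' k : ℕ, (2 * ((n:ℝ)+1)) * min 1 (dist x y ^ 2 / 4 ^ k) := by
          apply Summable.tsum_le_tsum _ (hsum_k x y) (hgeom2 x y)
          intro k
          exact_mod_cast htsum_q_le x y k
      _ = (2 * ((n:ℝ)+1)) * ∑' k : ℕ, min 1 (dist x y ^ 2 / 4 ^ k) := tsum_mul_left
  -- the distinguished coordinate coming from the cover
  have hcover1 : ∀ (x : X) (k : ℕ), ∃ (i : Fin (n+1)) (m : ℕ),
      valF U e x (k, i, m) = 1 ∧
      ∀ y : X, B k + 2 ^ (k+1) < dist x y → valF U e y (k, i, m) = 0 := by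
    intro x k
    obtain ⟨i, u, hu, hxu⟩ := hcov k x
    have hune : u.Nonempty := ⟨x, hxu⟩
    have hex : ∃ u', u' ∈ U (k, i, iuF e u).1 (k, i, iuF e u).2.1 ∧ u'.Nonempty ∧
        iuF e u' = (k, i, iuF e u).2.2 := ⟨u, hu, hune, rfl⟩
    have hch : hex.choose = u :=
      hiu_inj k i _ u hex.choose_spec.1 hu hex.choose_spec.2.1 hune hex.choose_spec.2.2
    refine ⟨i, iuF e u, ?_, ?_⟩
    · show valF U e x (k, i, iuF e u) = 1
      unfold valF
      rw [dif_pos hex, hch]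
      exact phiF_eq_one k hxu
    · intro y hy
      show valF U e y (k, i, iuF e u) = 0
      unfold valF
      rw [dif_pos hex, hch]
      by_contra hne0
      have hpos : 0 < phiF k u y := lt_of_le_of_ne (phiF_nonneg _ _ _) (Ne.symm hne0)
      obtain ⟨g, hg, hgy⟩ := (infDist_lt_iff hune).1 (phiF_pos hpos)
      have hdxg : dist x g ≤ B k := hdiam k i u hu x hxu g hg
      have htri : dist x y ≤ dist x g + dist y g := by
        rw [dist_comm y g]
        exact dist_triangle x g y
      have h2 : (2:ℝ) ^ k ≤ 2 ^ (k+1) := by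
        apply pow_le_pow_right₀ (by norm_num)
        omega
      linarith
  choose I M hval1 hval0 using hcover1
  -- lower bound on the tsum
  have hcount : ∀ (x y : X) (Q : Finset ℕ), (∀ k ∈ Q, B k + 2 ^ (k+1) < dist x y) →
      (Q.card : ℝ) ≤ ∑' p : ℕ × Fin (n+1) × ℕ, FF U e x y p := by
    intro x y Q hQ
    have hinj : ∀ k ∈ Q, ∀ k' ∈ Q,
        ((k, I x k, M x k) : ℕ × Fin (n+1) × ℕ) = (k', I x k', M x k') → k = k' := by
      intro k _ k' _ hkk
      exact congrArg Prod.fst hkk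
    have himg : ∑ p ∈ Q.image (fun k => ((k, I x k, M x k) : ℕ × Fin (n+1) × ℕ)),
        FF U e x y p = ∑ k ∈ Q, FF U e x y (k, I x k, M x k) :=
      Finset.sum_image hinj
    have hone : ∀ k ∈ Q, FF U e x y (k, I x k, M x k) = 1 := by
      intro k hk
      rw [FF, hval1 x k, hval0 x k y (hQ k hk)]
      norm_num
    calc (Q.card : ℝ) = ∑ k ∈ Q, (1:ℝ) := by simp
      _ = ∑ k ∈ Q, FF U e x y (k, I x k, M x k) :=
          Finset.sum_congr rfl (fun k hk => (hone k hk).symm)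
      _ = ∑ p ∈ Q.image (fun k => ((k, I x k, M x k) : ℕ × Fin (n+1) × ℕ)),
          FF U e x y p := himg.symm
      _ ≤ ∑' p : ℕ × Fin (n+1) × ℕ, FF U e x y p :=
          Summable.sum_le_tsum _ (fun p _ => hFnonneg x y p) (hsumF x y)
  -- the embedding
  obtain ⟨x0⟩ := (inferInstance : Nonempty X)
  have hrpow : ∀ r : ℝ, ‖r‖ ^ (2:ℝ≥0∞).toReal = r ^ 2 := by
    intro r
    rw [show ((2:ℝ≥0∞)).toReal = ((2:ℕ):ℝ) by norm_num, Real.rpow_natCast,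
      Real.norm_eq_abs, sq_abs]
  have hmem : ∀ x : X,
      Memℓp (fun p : ℕ × Fin (n+1) × ℕ => valF U e x p - valF U e x0 p) 2 := by
    intro x
    apply memℓp_gen
    have heq : (fun p : ℕ × Fin (n+1) × ℕ =>
        ‖valF U e x p - valF U e x0 p‖ ^ (2:ℝ≥0∞).toReal) = FF U e x x0 := by
      funext p
      rw [hrpow, FF]
    rw [heq]
    exact hsumF x x0
  set f : X → lp (fun _ : ℕ × Fin (n+1) × ℕ => ℝ) 2 :=
    fun x => ⟨fun p => valF U e x p - valF U e x0 p, hmem x⟩ with hfdef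
  have hdist2 : ∀ a b : X, dist (f a) (f b) ^ 2 = ∑' p : ℕ × Fin (n+1) × ℕ, FF U e a b p := by
    intro a b
    rw [dist_eq_norm]
    have hcoord : ∀ p : ℕ × Fin (n+1) × ℕ,
        (f a - f b : lp (fun _ : ℕ × Fin (n+1) × ℕ => ℝ) 2) p
          = valF U e a p - valF U e b p := by
      intro p
      rw [lp.coeFn_sub]
      show (f a : ∀ _ : ℕ × Fin (n+1) × ℕ, ℝ) p - (f b : ∀ _ : ℕ × Fin (n+1) × ℕ, ℝ) p
        = valF U e a p - valF U e b p
      show (valF U e a p - valF U e x0 p) - (valF U e b p - valF U e x0 p)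
        = valF U e a p - valF U e b p
      ring
    have hnorm := lp.norm_rpow_eq_tsum (p := 2) (by norm_num) (f a - f b)
    calc ‖f a - f b‖ ^ 2 = ‖f a - f b‖ ^ (2:ℝ≥0∞).toReal := by
          rw [show ((2:ℝ≥0∞)).toReal = ((2:ℕ):ℝ) by norm_num, Real.rpow_natCast]
      _ = ∑' p : ℕ × Fin (n+1) × ℕ,
          ‖(f a - f b : lp (fun _ : ℕ × Fin (n+1) × ℕ => ℝ) 2) p‖ ^ (2:ℝ≥0∞).toReal := hnorm
      _ = ∑' p : ℕ × Fin (n+1) × ℕ, FF U e a b p := by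
          apply tsum_congr
          intro p
          rw [hrpow, hcoord p, FF]
  -- the compression functions
  set ρ1 : ℝ → ℝ := fun r =>
    Real.sqrt (((Finset.range ⌈r⌉₊).filter (fun k => B k + 2 ^ (k+1) < r)).card) with hρ1
  set ρ2 : ℝ → ℝ := fun r =>
    Real.sqrt ((2 * ((n:ℝ)+1)) * ∑' k : ℕ, min 1 ((max 0 r) ^ 2 / 4 ^ k)) with hρ2
  have hmono1 : Monotone ρ1 := by
    intro r r' hr
    apply Real.sqrt_le_sqrt
    have hsub : (Finset.range ⌈r⌉₊).filter (fun k => B k + 2 ^ (k+1) < r) ⊆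
        (Finset.range ⌈r'⌉₊).filter (fun k => B k + 2 ^ (k+1) < r') := by
      intro k hk
      simp only [Finset.mem_filter, Finset.mem_range] at hk ⊢
      exact ⟨lt_of_lt_of_le hk.1 (Nat.ceil_mono hr), lt_of_lt_of_le hk.2 hr⟩
    exact_mod_cast Finset.card_le_card hsub
  have hmono2 : Monotone ρ2 := by
    intro r r' hr
    apply Real.sqrt_le_sqrt
    apply mul_le_mul_of_nonneg_left _ (by positivity)
    apply Summable.tsum_le_tsum _ (hgeom _ (sq_nonneg _)) (hgeom _ (sq_nonneg _))
    intro k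
    apply min_le_min le_rfl
    apply div_le_div_of_nonneg_right _ (by positivity)
    have : max 0 r ≤ max 0 r' := max_le_max le_rfl hr
    exact pow_le_pow_left₀ (le_max_left _ _) this 2
  have htend : Filter.Tendsto ρ1 Filter.atTop Filter.atTop := by
    rw [Filter.tendsto_atTop_atTop]
    intro b
    set N : ℕ := ⌈b ^ 2⌉₊ with hN
    refine ⟨1 + ∑ k ∈ Finset.range N, (B k + 2 ^ (k+1)), fun r hr => ?_⟩
    have hsub : Finset.range N ⊆
        (Finset.range ⌈r⌉₊).filter (fun k => B k + 2 ^ (k+1) < r) := by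
      intro k hk
      simp only [Finset.mem_range] at hk
      have hterm : B k + 2 ^ (k+1) ≤ ∑ j ∈ Finset.range N, (B j + 2 ^ (j+1)) :=
        Finset.single_le_sum (f := fun j => B j + 2 ^ (j+1)) (fun j _ => add_nonneg (hB j) (by positivity))
          (Finset.mem_range.2 hk)
      have h1 : B k + 2 ^ (k+1) < r := by linarith
      simp only [Finset.mem_filter, Finset.mem_range]
      refine ⟨Nat.lt_ceil.2 ?_, h1⟩
      have hk2 : (k:ℝ) < 2 ^ (k+1) := by
        exact_mod_cast (Nat.lt_two_pow_self (n := k)).trans_le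
          (Nat.pow_le_pow_right (by norm_num) (Nat.le_succ k))
      linarith [hB k]
    have hcard : (N:ℝ) ≤
        (((Finset.range ⌈r⌉₊).filter (fun k => B k + 2 ^ (k+1) < r)).card : ℝ) := by
      have := Finset.card_le_card hsub
      rw [Finset.card_range] at this
      exact_mod_cast this
    have hb2 : b ^ 2 ≤ (N:ℝ) := Nat.le_ceil _
    calc b ≤ |b| := le_abs_self b
      _ = Real.sqrt (b ^ 2) := (Real.sqrt_sq_eq_abs b).symm
      _ ≤ ρ1 r := Real.sqrt_le_sqrt (by linarith)
  refine ⟨f, ρ1, ρ2, hmono1, hmono2, htend, fun a b => ⟨?_, ?_⟩⟩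
  · -- lower bound
    set Q : Finset ℕ :=
      (Finset.range ⌈dist a b⌉₊).filter (fun k => B k + 2 ^ (k+1) < dist a b) with hQ
    have hQd : ∀ k ∈ Q, B k + 2 ^ (k+1) < dist a b := by
      intro k hk
      exact (Finset.mem_filter.1 hk).2
    have h1 : (Q.card : ℝ) ≤ ∑' p : ℕ × Fin (n+1) × ℕ, FF U e a b p := hcount a b Q hQd
    calc ρ1 (dist a b) = Real.sqrt (Q.card) := rfl
      _ ≤ Real.sqrt (∑' p : ℕ × Fin (n+1) × ℕ, FF U e a b p) := Real.sqrt_le_sqrt h1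
      _ = Real.sqrt (dist (f a) (f b) ^ 2) := by rw [hdist2 a b]
      _ = dist (f a) (f b) := Real.sqrt_sq dist_nonneg
  · -- upper bound
    have hmax : max 0 (dist a b) = dist a b := max_eq_right dist_nonneg
    calc dist (f a) (f b) = Real.sqrt (dist (f a) (f b) ^ 2) :=
          (Real.sqrt_sq dist_nonneg).symm
      _ = Real.sqrt (∑' p : ℕ × Fin (n+1) × ℕ, FF U e a b p) := by rw [hdist2 a b]
      _ ≤ ρ2 (dist a b) := by
          rw [hρ2]
          apply Real.sqrt_le_sqrt
          simp only [hmax]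
          exact htsum_le a b

end

/-- A finitely generated group of finite asymptotic dimension admits a coarse embedding
into a Hilbert space. -/
theorem stmt19 {Γ : Type*} [Group Γ] (S : Finset Γ)
    (hS : Subgroup.closure (S : Set Γ) = ⊤)
    (hfin : asdimD (wordDist (S : Set Γ)) < ⊤) :
    ∃ (H : Type) (_ : NormedAddCommGroup H) (_ : InnerProductSpace ℝ H)
      (_ : CompleteSpace H) (f : Γ → H) (ρ1 ρ2 : ℝ → ℝ),
      Monotone ρ1 ∧ Monotone ρ2 ∧
      Filter.Tendsto ρ1 Filter.atTop Filter.atTop ∧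
      ∀ a b : Γ, ρ1 (wordDist (S : Set Γ) a b) ≤ dist (f a) (f b) ∧
        dist (f a) (f b) ≤ ρ2 (wordDist (S : Set Γ) a b) := by
  classical
  letI : PseudoMetricSpace Γ := wordPseudoMetric (S := (S : Set Γ)) hS
  haveI : Countable Γ := countable_of_gen hS S.countable_toSet
  have hn : ∃ n : ℕ, AsdimLE (wordDist (S : Set Γ)) n := by
    by_contra h
    push_neg at h
    have htop : (⨅ (n : ℕ) (_ : AsdimLE (wordDist (S : Set Γ)) n), (n : ℕ∞)) = ⊤ :=
      le_antisymm le_top (le_iInf fun n => le_iInf fun hAn => (h n hAn).elim)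
    unfold asdimD at hfin
    rw [htop] at hfin
    exact lt_irrefl _ hfin
  obtain ⟨n, hA⟩ := hn
  have hA' : AsdimLE (fun x y : Γ => dist x y) n := hA
  obtain ⟨f, ρ1, ρ2, h1, h2, h3, h4⟩ := coarse_embed_aux n hA'
  exact ⟨lp (fun _ : ℕ × Fin (n+1) × ℕ => ℝ) 2, inferInstance, inferInstance, inferInstance,
    f, ρ1, ρ2, h1, h2, h3, fun a b => h4 a b⟩
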